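/- Let M, N be positive integers, n = M·N, and let G ∈ ℂ^{M×M} be a diagonal matrix with real entries satisfying G·G = I_M. For real numbers k and l, define T := (F_N ⊗ G) · D^k · F_n^H · (D*)^l · F_n · (F_N^H ⊗ G) and Q(a) := (F_N ⊗ G) · D^a · F_n^H · (F_N ⊗ G) for a ∈ ℝ. Then T = Q(k) · conj(Q(l)), where conj denotes the entrywise complex conjugate matrix. -/
import Mathlib


open Matrix Kronecker

/-- The `n`-point unitary DFT matrix with entries `(1/√n)·exp(-2πi·p·q/n)`. -/
noncomputable def dftMatrix (n : ℕ) : Matrix (Fin n) (Fin n) ℂ :=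
  Matrix.of fun p q => (1 / (Real.sqrt n : ℂ)) *
    Complex.exp (-(2 * (Real.pi : ℂ) * Complex.I * ((p : ℕ) : ℂ) * ((q : ℕ) : ℂ) / (n : ℂ)))

/-- The `M·N`-point unitary DFT matrix, indexed by pairs via the standard
Kronecker/vec ordering `(p₁, p₂) ↦ p₁·M + p₂`. -/
noncomputable def dftMatrixPair (M N : ℕ) : Matrix (Fin N × Fin M) (Fin N × Fin M) ℂ :=
  Matrix.of fun p q => (1 / (Real.sqrt (M * N) : ℂ)) *
    Complex.exp (-(2 * (Real.pi : ℂ) * Complex.I *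
      (((p.1 : ℕ) * M + (p.2 : ℕ) : ℕ) : ℂ) * (((q.1 : ℕ) * M + (q.2 : ℕ) : ℕ) : ℂ) /
      ((M * N : ℕ) : ℂ)))

/-- The diagonal matrix `D^a = diag(exp(2πi·q·a/(M·N)))`, indexed by pairs. -/
noncomputable def DpowPair (M N : ℕ) (a : ℝ) : Matrix (Fin N × Fin M) (Fin N × Fin M) ℂ :=
  Matrix.diagonal fun q =>
    Complex.exp (2 * (Real.pi : ℂ) * Complex.I *
      (((q.1 : ℕ) * M + (q.2 : ℕ) : ℕ) : ℂ) * (a : ℂ) / ((M * N : ℕ) : ℂ))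

/-- The diagonal matrix `(D*)^a = diag(exp(-2πi·q·a/(M·N)))`, indexed by pairs. -/
noncomputable def DconjPowPair (M N : ℕ) (a : ℝ) : Matrix (Fin N × Fin M) (Fin N × Fin M) ℂ :=
  Matrix.diagonal fun q =>
    Complex.exp (-(2 * (Real.pi : ℂ) * Complex.I *
      (((q.1 : ℕ) * M + (q.2 : ℕ) : ℕ) : ℂ) * (a : ℂ) / ((M * N : ℕ) : ℂ)))

lemma root_sum (N : ℕ) (hN : 0 < N) (d : ℤ) (hd : d.natAbs < N) :
    ∑ q ∈ Finset.range N, Complex.exp (2 * (Real.pi : ℂ) * Complex.I * (d : ℂ) / (N : ℂ)) ^ q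
      = if d = 0 then (N : ℂ) else 0 := by
  set z := Complex.exp (2 * (Real.pi : ℂ) * Complex.I * (d : ℂ) / (N : ℂ)) with hz
  have hNC : (N : ℂ) ≠ 0 := Nat.cast_ne_zero.mpr hN.ne'
  by_cases hd0 : d = 0
  · simp [hz, hd0]
  · rw [if_neg hd0]
    have hzN : z ^ N = 1 := by
      rw [hz, ← Complex.exp_nat_mul]
      rw [show (N : ℂ) * (2 * (Real.pi : ℂ) * Complex.I * (d : ℂ) / (N : ℂ))
          = (d : ℂ) * (2 * (Real.pi : ℂ) * Complex.I) by field_simp]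
      exact Complex.exp_int_mul_two_pi_mul_I d
    have hz1 : z ≠ 1 := by
      intro h
      rw [hz, Complex.exp_eq_one_iff] at h
      obtain ⟨m, hm⟩ := h
      have h2 : (2 * (Real.pi : ℂ) * Complex.I) ≠ 0 := by
        simp [Real.pi_ne_zero, Complex.I_ne_zero]
      have h3 : (2 * (Real.pi : ℂ) * Complex.I) * ((d : ℂ) / (N : ℂ) - (m : ℂ)) = 0 := by
        linear_combination hm
      have h4 : (d : ℂ) / (N : ℂ) - (m : ℂ) = 0 := by
        rcases mul_eq_zero.mp h3 with h | h
        · exact absurd h h2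
        · exact h
      have h5 : (d : ℂ) = (m : ℂ) * (N : ℂ) := by
        field_simp at h4
        linear_combination h4
      have h6 : d = m * N := by exact_mod_cast h5
      have hm0 : m ≠ 0 := by rintro rfl; simp at h6; exact hd0 h6
      have h7 : d.natAbs = m.natAbs * N := by rw [h6, Int.natAbs_mul, Int.natAbs_natCast]
      have h8 : 1 ≤ m.natAbs := Int.natAbs_pos.mpr hm0
      nlinarith [hd, h7, h8]
    rw [geom_sum_eq hz1, hzN, sub_self, zero_div]

lemma dft_mul_conjTranspose (N : ℕ) (hN : 0 < N) :
    dftMatrix N * (dftMatrix N)ᴴ = 1 := by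
  have hNC : (N : ℂ) ≠ 0 := Nat.cast_ne_zero.mpr hN.ne'
  ext p p'
  rw [Matrix.mul_apply, Matrix.one_apply]
  have hsq : ((Real.sqrt N : ℝ) : ℂ) * ((Real.sqrt N : ℝ) : ℂ) = (N : ℂ) := by
    rw [← Complex.ofReal_mul, Real.mul_self_sqrt (Nat.cast_nonneg N)]
    norm_cast
  have hterm : ∀ q : Fin N, dftMatrix N p q * (dftMatrix N)ᴴ q p'
      = (1 / (N : ℂ)) * Complex.exp (2 * (Real.pi : ℂ) * Complex.I *
          ((((p' : ℕ) : ℤ) - ((p : ℕ) : ℤ) : ℤ) : ℂ) / (N : ℂ)) ^ (q : ℕ) := by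
    intro q
    simp only [dftMatrix, Matrix.conjTranspose_apply, Matrix.of_apply, star_mul',
      Complex.star_def, ← Complex.exp_conj, map_neg, map_div₀, _root_.map_mul, Complex.conj_I,
      Complex.conj_ofReal, Complex.conj_natCast, _root_.map_one, map_ofNat]
    rw [← Complex.exp_nat_mul, mul_mul_mul_comm, div_mul_div_comm, one_mul, hsq,
      ← Complex.exp_add]
    congr 1
    push_cast
    ring_nf
  rw [Finset.sum_congr rfl (fun q _ => hterm q), ← Finset.mul_sum]
  have hrange := Fin.sum_univ_eq_sum_range (fun q : ℕ => Complex.exp (2 * (Real.pi : ℂ) *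
    Complex.I * ((((p' : ℕ) : ℤ) - ((p : ℕ) : ℤ) : ℤ) : ℂ) / (N : ℂ)) ^ q) N
  rw [hrange, root_sum N hN _ (by have := p.isLt; have := p'.isLt; omega)]
  have hiff : (((p' : ℕ) : ℤ) - ((p : ℕ) : ℤ) = 0) ↔ p = p' := by
    rw [sub_eq_zero]
    constructor
    · intro h; exact Fin.ext (by exact_mod_cast h.symm)
    · rintro rfl; rfl
  by_cases hpp : p = p'
  · rw [if_pos (hiff.mpr hpp), if_pos hpp, one_div, inv_mul_cancel₀ hNC]
  · rw [if_neg (fun h => hpp (hiff.mp h)), if_neg hpp, mul_zero]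

lemma dftMatrixPair_symm (M N : ℕ) (p q : Fin N × Fin M) :
    dftMatrixPair M N p q = dftMatrixPair M N q p := by
  simp only [dftMatrixPair, Matrix.of_apply]
  ring_nf

lemma dftMatrixPair_conjT_map_conj (M N : ℕ) :
    ((dftMatrixPair M N)ᴴ).map (starRingEnd ℂ) = dftMatrixPair M N := by
  ext p q
  simp only [Matrix.map_apply, Matrix.conjTranspose_apply, Complex.star_def,
    Complex.conj_conj]
  exact (dftMatrixPair_symm M N p q).symm

lemma dft_map_conj (N : ℕ) :
    (dftMatrix N).map (starRingEnd ℂ) = (dftMatrix N)ᴴ := by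
  ext p q
  simp only [Matrix.map_apply, Matrix.conjTranspose_apply, Complex.star_def]
  congr 1
  simp only [dftMatrix, Matrix.of_apply]
  ring_nf

lemma Dpow_map_conj (M N : ℕ) (a : ℝ) :
    (DpowPair M N a).map (starRingEnd ℂ) = DconjPowPair M N a := by
  ext p q
  simp only [DpowPair, DconjPowPair, Matrix.map_apply, Matrix.diagonal]
  by_cases h : p = q
  · subst h
    simp only [Matrix.of_apply, if_pos rfl, if_true]
    rw [← Complex.exp_conj]
    congr 1
    simp only [map_div₀, _root_.map_mul, map_neg, Complex.conj_I, Complex.conj_ofReal,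
      Complex.conj_natCast, map_ofNat]
    ring
  · simp [Matrix.of_apply, if_neg h, h]

lemma kron_map_conj {m n : Type*} (A : Matrix m m ℂ) (B : Matrix n n ℂ) :
    (A ⊗ₖ B).map (starRingEnd ℂ) = (A.map (starRingEnd ℂ)) ⊗ₖ (B.map (starRingEnd ℂ)) := by
  ext p q
  simp [Matrix.kroneckerMap_apply, Matrix.map_apply]

/-- **Eqs. (24)–(25)**: the delay–Doppler path matrix
`T = (F_N ⊗ G)·D^k·F_n^H·(D*)^l·F_n·(F_N^H ⊗ G)` factors as `T = Q(k)·conj(Q(l))`,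
where `Q(a) = (F_N ⊗ G)·D^a·F_n^H·(F_N ⊗ G)`. -/
theorem T_eq_Q_mul_conjQ (M N : ℕ) (hM : 0 < M) (hN : 0 < N)
    (gd : Fin M → ℝ)
    (G : Matrix (Fin M) (Fin M) ℂ)
    (hG : G = Matrix.diagonal fun i => ((gd i : ℝ) : ℂ))
    (hGG : G * G = 1)
    (k l : ℝ)
    (T : Matrix (Fin N × Fin M) (Fin N × Fin M) ℂ)
    (hT : T = (dftMatrix N ⊗ₖ G) * DpowPair M N k * (dftMatrixPair M N)ᴴ *
      DconjPowPair M N l * dftMatrixPair M N * ((dftMatrix N)ᴴ ⊗ₖ G))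
    (Q : ℝ → Matrix (Fin N × Fin M) (Fin N × Fin M) ℂ)
    (hQ : ∀ a : ℝ, Q a = (dftMatrix N ⊗ₖ G) * DpowPair M N a * (dftMatrixPair M N)ᴴ *
      (dftMatrix N ⊗ₖ G)) :
    T = Q k * (Q l).map (starRingEnd ℂ) := by
  have hGconj : G.map (starRingEnd ℂ) = G := by
    subst hG
    ext p q
    by_cases h : p = q
    · subst h; simp [Matrix.diagonal, Complex.conj_ofReal]
    · simp [Matrix.diagonal, h]
  have hconjQ : (Q l).map (starRingEnd ℂ) =
      ((dftMatrix N)ᴴ ⊗ₖ G) * DconjPowPair M N l * dftMatrixPair M N *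
        ((dftMatrix N)ᴴ ⊗ₖ G) := by
    rw [hQ l, Matrix.map_mul, Matrix.map_mul, Matrix.map_mul, kron_map_conj,
      dft_map_conj, hGconj, Dpow_map_conj, dftMatrixPair_conjT_map_conj]
  have hone : (dftMatrix N ⊗ₖ G) * ((dftMatrix N)ᴴ ⊗ₖ G) = 1 := by
    rw [← Matrix.mul_kronecker_mul, dft_mul_conjTranspose N hN, hGG,
      Matrix.one_kronecker_one]
  rw [hconjQ, hQ k, hT]
  simp only [← Matrix.mul_assoc]
  rw [Matrix.mul_assoc ((dftMatrix N ⊗ₖ G) * DpowPair M N k * (dftMatrixPair M N)ᴴ)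
    (dftMatrix N ⊗ₖ G) ((dftMatrix N)ᴴ ⊗ₖ G), hone, Matrix.mul_one]
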